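/- The functions z₁(t) = ω·cos(ωt) − λ·coth(λt+γ)·sin(ωt) and z₂(t) = ω·sin(ωt) + λ·coth(λt+γ)·cos(ωt) both satisfy z'' + (ω² − 2λ²/sinh²(λt+γ))·z = 0 at every t with sinh(λt+γ) ≠ 0, and their Wronskian z₁·z₂' − z₁'·z₂ equals the constant ω·(ω² + λ²). -/

import Mathlib

/-!
With the superpotential `W t = λ coth(λt + γ)`, which solves the Riccati equation `W' = λ² - W²`,
`z₁` and `z₂` are the Darboux transforms `z = y' - W y` of the free solutions `y = sin(ωt)` and
`y = -cos(ωt)` of `y'' = -ω² y`. Differentiating twice and using the Riccati equation, the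
Darboux transform of a solution of `y'' = -E y` solves `z'' + (E + 2W') z = 0`, where
`2W' = -2λ²/sinh²(λt + γ)`, and it multiplies Wronskians by `E + λ²`; the Wronskian of
`sin(ωt)` and `-cos(ωt)` is `ω`.
-/

open Real Filter Topology

section Darboux

variable {W y dy y₁ dy₁ y₂ dy₂ : ℝ → ℝ} {E κ t : ℝ}

theorem hasDerivAt_darboux (hW : HasDerivAt W (κ - W t ^ 2) t) (hy : HasDerivAt y (dy t) t)
    (hdy : HasDerivAt dy (-E * y t) t) :
    HasDerivAt (fun s => dy s - W s * y s) (-(E + κ - W t ^ 2) * y t - W t * dy t) t :=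
  (hdy.sub (hW.mul hy)).congr_deriv (by ring)

theorem deriv_deriv_darboux_add (hW : ∀ᶠ s in 𝓝 t, HasDerivAt W (κ - W s ^ 2) s)
    (hy : ∀ s, HasDerivAt y (dy s) s) (hdy : ∀ s, HasDerivAt dy (-E * y s) s) :
    deriv (deriv fun s => dy s - W s * y s) t + (E + 2 * (κ - W t ^ 2)) * (dy t - W t * y t)
      = 0 := by
  have hderiv : deriv (fun s => dy s - W s * y s) =ᶠ[𝓝 t]
      fun s => -(E + κ - W s ^ 2) * y s - W s * dy s :=
    hW.mono fun s hs => (hasDerivAt_darboux hs (hy s) (hdy s)).deriv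
  have hWt := hW.self_of_nhds
  have hderiv₂ : HasDerivAt (fun s => -(E + κ - W s ^ 2) * y s - W s * dy s)
      (-(E + 2 * (κ - W t ^ 2)) * (dy t - W t * y t)) t :=
    ((((hWt.pow 2).const_sub (E + κ)).neg.mul (hy t)).sub (hWt.mul (hdy t))).congr_deriv
      (by simp only [Pi.neg_apply, Pi.pow_apply]; ring)
  rw [hderiv.deriv_eq, hderiv₂.deriv]
  ring

theorem darboux_wronskian (hW : HasDerivAt W (κ - W t ^ 2) t)
    (hy₁ : HasDerivAt y₁ (dy₁ t) t) (hdy₁ : HasDerivAt dy₁ (-E * y₁ t) t)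
    (hy₂ : HasDerivAt y₂ (dy₂ t) t) (hdy₂ : HasDerivAt dy₂ (-E * y₂ t) t) :
    (dy₁ t - W t * y₁ t) * deriv (fun s => dy₂ s - W s * y₂ s) t
      - deriv (fun s => dy₁ s - W s * y₁ s) t * (dy₂ t - W t * y₂ t)
      = (E + κ) * (y₁ t * dy₂ t - dy₁ t * y₂ t) := by
  rw [(hasDerivAt_darboux hW hy₁ hdy₁).deriv, (hasDerivAt_darboux hW hy₂ hdy₂).deriv]
  ring

end Darboux

section Coth

variable {lam γ t : ℝ}

theorem sq_sub_sq_mul_coth (lam : ℝ) {x : ℝ} (h : sinh x ≠ 0) :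
    lam ^ 2 - (lam * (cosh x / sinh x)) ^ 2 = -lam ^ 2 / sinh x ^ 2 := by
  field_simp
  linear_combination (-lam ^ 2) * cosh_sq_sub_sinh_sq x

theorem hasDerivAt_mul_coth (h : sinh (lam * t + γ) ≠ 0) :
    HasDerivAt (fun s => lam * (cosh (lam * s + γ) / sinh (lam * s + γ)))
      (lam ^ 2 - (lam * (cosh (lam * t + γ) / sinh (lam * t + γ))) ^ 2) t := by
  have hlin : HasDerivAt (fun s => lam * s + γ) lam t :=
    (((hasDerivAt_id t).const_mul lam).add_const γ).congr_deriv (mul_one lam)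
  have hquot := (hlin.cosh.div hlin.sinh h).const_mul lam
  refine hquot.congr_deriv ?_
  rw [sq_sub_sq_mul_coth lam h]
  field_simp
  linear_combination (-lam ^ 2) * cosh_sq_sub_sinh_sq (lam * t + γ)

theorem eventually_hasDerivAt_mul_coth (h : sinh (lam * t + γ) ≠ 0) :
    ∀ᶠ s in 𝓝 t, HasDerivAt (fun s => lam * (cosh (lam * s + γ) / sinh (lam * s + γ)))
      (lam ^ 2 - (lam * (cosh (lam * s + γ) / sinh (lam * s + γ))) ^ 2) s :=
  ((by fun_prop : Continuous fun s => sinh (lam * s + γ)).continuousAt.eventually_ne h).mono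
    fun _ hs => hasDerivAt_mul_coth hs

end Coth

section Harmonic

variable (om t : ℝ)

theorem hasDerivAt_sin_mul : HasDerivAt (fun s => sin (om * s)) (om * cos (om * t)) t :=
  (((hasDerivAt_id t).const_mul om).sin).congr_deriv (by simp [mul_comm])

theorem hasDerivAt_neg_cos_mul : HasDerivAt (fun s => -cos (om * s)) (om * sin (om * t)) t :=
  (((hasDerivAt_id t).const_mul om).cos.neg).congr_deriv (by simp [mul_comm])

theorem hasDerivAt_const_mul_cos_mul :
    HasDerivAt (fun s => om * cos (om * s)) (-om ^ 2 * sin (om * t)) t :=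
  (((hasDerivAt_id t).const_mul om).cos.const_mul om).congr_deriv
    (by simp only [id_eq, mul_one]; ring)

theorem hasDerivAt_const_mul_sin_mul :
    HasDerivAt (fun s => om * sin (om * s)) (-om ^ 2 * -cos (om * t)) t :=
  ((hasDerivAt_sin_mul om t).const_mul om).congr_deriv (by ring)

end Harmonic

theorem stmt_15 (om lam γ : ℝ)
    (z₁ z₂ : ℝ → ℝ)
    (hz₁ : ∀ t, z₁ t = om * Real.cos (om * t) -
      lam * (Real.cosh (lam * t + γ) / Real.sinh (lam * t + γ)) * Real.sin (om * t))
    (hz₂ : ∀ t, z₂ t = om * Real.sin (om * t) +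
      lam * (Real.cosh (lam * t + γ) / Real.sinh (lam * t + γ)) * Real.cos (om * t)) :
    (∀ t : ℝ, Real.sinh (lam * t + γ) ≠ 0 →
      deriv (deriv z₁) t + (om ^ 2 - 2 * lam ^ 2 / Real.sinh (lam * t + γ) ^ 2) * z₁ t = 0) ∧
    (∀ t : ℝ, Real.sinh (lam * t + γ) ≠ 0 →
      deriv (deriv z₂) t + (om ^ 2 - 2 * lam ^ 2 / Real.sinh (lam * t + γ) ^ 2) * z₂ t = 0) ∧
    (∀ t : ℝ, Real.sinh (lam * t + γ) ≠ 0 →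
      z₁ t * deriv z₂ t - deriv z₁ t * z₂ t = om * (om ^ 2 + lam ^ 2)) := by
  have hz₁' : z₁ = fun s => om * cos (om * s)
      - lam * (cosh (lam * s + γ) / sinh (lam * s + γ)) * sin (om * s) := funext hz₁
  have hz₂' : z₂ = fun s => om * sin (om * s)
      - lam * (cosh (lam * s + γ) / sinh (lam * s + γ)) * -cos (om * s) :=
    funext fun s => by rw [hz₂]; ring
  have hpotential : ∀ t, sinh (lam * t + γ) ≠ 0 →
      om ^ 2 - 2 * lam ^ 2 / sinh (lam * t + γ) ^ 2
        = om ^ 2 + 2 * (lam ^ 2 - (lam * (cosh (lam * t + γ) / sinh (lam * t + γ))) ^ 2) :=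
    fun t ht => by rw [sq_sub_sq_mul_coth lam ht]; ring
  subst hz₁' hz₂'
  refine ⟨fun t ht => ?_, fun t ht => ?_, fun t ht => ?_⟩
  · rw [hpotential t ht]
    exact deriv_deriv_darboux_add (eventually_hasDerivAt_mul_coth ht) (hasDerivAt_sin_mul om)
      (hasDerivAt_const_mul_cos_mul om)
  · rw [hpotential t ht]
    exact deriv_deriv_darboux_add (eventually_hasDerivAt_mul_coth ht) (hasDerivAt_neg_cos_mul om)
      (hasDerivAt_const_mul_sin_mul om)
  · beta_reduce
    rw [darboux_wronskian (y₁ := fun s => sin (om * s)) (y₂ := fun s => -cos (om * s))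
      (hasDerivAt_mul_coth ht) (hasDerivAt_sin_mul om t)
      (hasDerivAt_const_mul_cos_mul om t) (hasDerivAt_neg_cos_mul om t)
      (hasDerivAt_const_mul_sin_mul om t)]
    linear_combination (om * (om ^ 2 + lam ^ 2)) * sin_sq_add_cos_sq (om * t)
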